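/- Let p be a prime, S a finite p-group, and F a fusion system on S satisfying Axiom I_S (Aut_S(S) is a Sylow p-subgroup of Aut_F(S)) and Axiom II (every φ ∈ Hom_F(P,S) such that φ(P) is fully F-centralized extends to a morphism in Hom_F(N_φ,S)). Then every fully F-normalized subgroup of S is fully F-centralized. -/

import Mathlib

/-! ## Collections of morphisms between subgroups -/

section Collections

variable {S : Type*} [Group S]

/-- The conjugation homomorphism `P →* S`, `u ↦ s * u * s⁻¹`. -/
def conjHom (s : S) (P : Subgroup S) : P →* S :=
  (MulAut.conj s).toMonoidHom.comp P.subtype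

/-- A "collection" of morphism sets on the poset of subgroups of `S`:
for each pair of subgroups `P Q ≤ S` a set of group homomorphisms `P →* S`
(to be thought of as morphisms from `P` to `Q`, i.e. maps landing in `Q`). -/
abbrev Collection (S : Type*) [Group S] :=
  ∀ (P : Subgroup S), Subgroup S → Set (P →* S)

namespace Collection

/-- `P` and `Q` are conjugate in the collection `C` if some morphism of `C`
restricts to an isomorphism from `P` onto `Q`. -/
def IsConj (C : Collection S) (P Q : Subgroup S) : Prop :=
  ∃ φ ∈ C P Q, MonoidHom.range φ = Q

/-- `P` is fully centralized: its centralizer has maximal order in its conjugacy class. -/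
def FullyCentralized (C : Collection S) (P : Subgroup S) : Prop :=
  ∀ Q : Subgroup S, C.IsConj P Q →
    Nat.card (Subgroup.centralizer (Q : Set S)) ≤ Nat.card (Subgroup.centralizer (P : Set S))

/-- `P` is fully normalized: its normalizer has maximal order in its conjugacy class. -/
def FullyNormalized (C : Collection S) (P : Subgroup S) : Prop :=
  ∀ Q : Subgroup S, C.IsConj P Q → Nat.card (Subgroup.normalizer (Q : Set S)) ≤ Nat.card (Subgroup.normalizer (P : Set S))

end Collection

/-- The set `Aut_S(P)` of automorphisms of `P` induced by conjugation by elements of the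
normalizer `N_S(P)`, as a set of homomorphisms `P →* S`. -/
def autSSet (P : Subgroup S) : Set (P →* S) :=
  {φ | ∃ s ∈ Subgroup.normalizer (P : Set S), φ = conjHom s P}

/-- `Aut_S(P)` is a Sylow `p`-subgroup of `Aut_C(P) = C P P`:  `Aut_S(P)` is contained
in `Aut_C(P)`, has `p`-power order, and has index prime to `p` in `Aut_C(P)`. -/
def Collection.AutSIsSylow (p : ℕ) (C : Collection S) (P : Subgroup S) : Prop :=
  autSSet P ⊆ C P P ∧ (∃ n : ℕ, Nat.card (autSSet P) = p ^ n) ∧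
    ∃ k : ℕ, ¬ p ∣ k ∧ Nat.card (C P P) = k * Nat.card (autSSet P)

/-- A collection is level-wise closed if it contains all conjugation maps induced by `S`,
the inverse of every isomorphism it contains, and all composites of composable
isomorphisms it contains. -/
def LevelwiseClosed (C : Collection S) : Prop :=
  (∀ (P Q : Subgroup S) (s : S), (∀ u ∈ P, s * u * s⁻¹ ∈ Q) → conjHom s P ∈ C P Q) ∧
  (∀ (P Q : Subgroup S), ∀ φ ∈ C P Q, MonoidHom.range φ = Q → ∀ ψ : Q →* S,
    (∀ (u : P) (hq : (φ u : S) ∈ Q), ψ ⟨φ u, hq⟩ = u) → ψ ∈ C Q P) ∧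
  (∀ (P Q R : Subgroup S) (φ : P →* S), φ ∈ C P Q → ∀ ψ : Q →* S, ψ ∈ C Q R →
    ∀ hφ : MonoidHom.range φ = Q, MonoidHom.range ψ = R →
    ψ.comp (φ.codRestrict Q (fun u => hφ ▸ show φ u ∈ φ.range from ⟨u, rfl⟩)) ∈ C P R)

end Collections

/-! ## Fusion systems -/

section Fusion

variable {S : Type*} [Group S]

/-- A fusion system on a group `S`: for each pair of subgroups `P, Q ≤ S`, a set
`Hom P Q` of injective homomorphisms `P → Q` (represented as homomorphisms `P →* S`
with image contained in `Q`), containing all conjugation maps induced by `S`, closed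
under composition, and such that every morphism restricts to an isomorphism onto its
image lying in the fusion system, whose inverse also lies in the fusion system. -/
structure FusionSystem (S : Type*) [Group S] where
  Hom : Collection S
  injective' : ∀ {P Q : Subgroup S} {φ : P →* S}, φ ∈ Hom P Q → Function.Injective φ
  mapsTo' : ∀ {P Q : Subgroup S} {φ : P →* S}, φ ∈ Hom P Q → ∀ u : P, φ u ∈ Q
  conj_mem' : ∀ (P Q : Subgroup S) (s : S), (∀ u ∈ P, s * u * s⁻¹ ∈ Q) →
    conjHom s P ∈ Hom P Q
  comp_mem' : ∀ {P Q R : Subgroup S} {φ : P →* S} {ψ : Q →* S},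
    (hφ : φ ∈ Hom P Q) → (hψ : ψ ∈ Hom Q R) →
    ψ.comp (φ.codRestrict Q (mapsTo' hφ)) ∈ Hom P R
  target_mem' : ∀ {P Q : Subgroup S} {φ : P →* S}, φ ∈ Hom P Q → φ ∈ Hom P φ.range
  inv_mem' : ∀ {P Q : Subgroup S} {φ : P →* S}, φ ∈ Hom P Q →
    ∃ ψ ∈ Hom φ.range P, ∀ u : P, ψ ⟨φ u, ⟨u, rfl⟩⟩ = u

/-- The subgroup `N_φ = {x ∈ N_S(P) | ∃ y ∈ N_S(φ(P)), ∀ u ∈ P, φ(xux⁻¹) = yφ(u)y⁻¹}`. -/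
def Nphi (P : Subgroup S) (φ : P →* S) : Subgroup S where
  carrier := {x | x ∈ Subgroup.normalizer (P : Set S) ∧ ∃ y ∈ Subgroup.normalizer (φ.range : Set S),
    ∀ (u v : S) (hu : u ∈ P) (hv : v ∈ P), v = x * u * x⁻¹ →
      φ ⟨v, hv⟩ = y * φ ⟨u, hu⟩ * y⁻¹}
  one_mem' := by
    refine ⟨(Subgroup.normalizer (P : Set S)).one_mem, 1, (Subgroup.normalizer (φ.range : Set S)).one_mem, ?_⟩
    intro u v hu hv hveq
    have h1 : (⟨v, hv⟩ : P) = ⟨u, hu⟩ := Subtype.ext (show v = u by rw [hveq]; group)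
    rw [h1]; group
  mul_mem' := by
    rintro x₁ x₂ ⟨hx₁, y₁, hy₁, h₁⟩ ⟨hx₂, y₂, hy₂, h₂⟩
    refine ⟨mul_mem hx₁ hx₂, y₁ * y₂, mul_mem hy₁ hy₂, ?_⟩
    intro u v hu hv hveq
    have hw : x₂ * u * x₂⁻¹ ∈ P := (Subgroup.mem_normalizer_iff.mp hx₂ u).mp hu
    have e1 : φ ⟨v, hv⟩ = y₁ * φ ⟨x₂ * u * x₂⁻¹, hw⟩ * y₁⁻¹ :=
      h₁ _ _ hw hv (by rw [hveq]; group)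
    have e2 : φ ⟨x₂ * u * x₂⁻¹, hw⟩ = y₂ * φ ⟨u, hu⟩ * y₂⁻¹ := h₂ _ _ hu hw rfl
    rw [e1, e2]; group
  inv_mem' := by
    rintro x ⟨hx, y, hy, h⟩
    refine ⟨Subgroup.inv_mem _ hx, y⁻¹, Subgroup.inv_mem _ hy, ?_⟩
    intro u v hu hv hveq
    have e1 : φ ⟨u, hu⟩ = y * φ ⟨v, hv⟩ * y⁻¹ :=
      h _ _ hv hu (by rw [hveq]; group)
    rw [e1]; group

namespace FusionSystem

/-- Axiom I of saturation: every fully normalized subgroup is fully centralized and its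
`S`-automorphism group is a Sylow `p`-subgroup of its full automorphism group. -/
def AxiomI (p : ℕ) (F : FusionSystem S) : Prop :=
  ∀ P : Subgroup S, F.Hom.FullyNormalized P →
    F.Hom.FullyCentralized P ∧ F.Hom.AutSIsSylow p P

/-- Axiom I restricted to the full subgroup `S` itself:
`Aut_S(S)` is a Sylow `p`-subgroup of `Aut_F(S)`. -/
def AxiomIS (p : ℕ) (F : FusionSystem S) : Prop :=
  F.Hom.AutSIsSylow p ⊤

/-- Axiom II of saturation (the extension axiom): every morphism `φ : P → S` of `F`
whose image is fully centralized extends to a morphism of `F` defined on `N_φ`. -/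
def AxiomII (F : FusionSystem S) : Prop :=
  ∀ (P : Subgroup S) (φ : P →* S), φ ∈ F.Hom P ⊤ →
    F.Hom.FullyCentralized φ.range →
    ∃ φbar ∈ F.Hom (Nphi P φ) ⊤,
      ∀ (u : S) (hu : u ∈ P) (hu' : u ∈ Nphi P φ), φbar ⟨u, hu'⟩ = φ ⟨u, hu⟩

/-- A fusion system is saturated if it satisfies Axioms I and II. -/
def Saturated (p : ℕ) (F : FusionSystem S) : Prop :=
  F.AxiomI p ∧ F.AxiomII

end FusionSystem

/-- The closure of a collection: the smallest fusion system containing it.  (The morphism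
sets of the closure are the intersections of the morphism sets over all fusion systems
containing the collection.) -/
def closureHom (C : Collection S) : Collection S :=
  fun P Q =>
    {φ | ∀ F : FusionSystem S, (∀ P' Q', C P' Q' ⊆ F.Hom P' Q') → φ ∈ F.Hom P Q}

/-- A level-wise closed collection `C` is saturated at `P ≤ S` if:
(I_P) every fully normalized `Q` conjugate to `P` in `C` is fully centralized and
`Aut_S(Q)` is a Sylow `p`-subgroup of `Aut_C(Q)`; and
(II_P) every `φ ∈ Hom_C(P,S)` with fully centralized image extends to a morphism
`N_φ → S` in the closure of `C`. -/
def SaturatedAt (p : ℕ) (C : Collection S) (P : Subgroup S) : Prop :=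
  (∀ Q : Subgroup S, C.IsConj P Q → C.FullyNormalized Q →
    C.FullyCentralized Q ∧ C.AutSIsSylow p Q) ∧
  (∀ φ ∈ C P ⊤, C.FullyCentralized (MonoidHom.range φ) →
    ∃ φbar ∈ closureHom C (Nphi P φ) ⊤,
      ∀ (u : S) (hu : u ∈ P) (hu' : u ∈ Nphi P φ), φbar ⟨u, hu'⟩ = φ ⟨u, hu⟩)

end Fusion

/-!
Every `F`-conjugacy class contains a fully centralized `R` for which `Aut_S(R)` is a Sylow
`p`-subgroup of `Aut_F(R)`; this is proved by downward induction on the order. Take `R` fully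
centralized in the class of `P` with `|Aut_S(R)|` maximal. If `Aut_S(R)` were not Sylow, some
`p`-element `α ∈ Aut_F(R) \ Aut_S(R)` would normalize `Aut_S(R)`; then `N_α = N_S(R)`, and
Axiom II extends `α` to an automorphism `β` of `N_S(R)`, which a suitable power turns into a
`p`-element. As `N_S(R) > R`, by induction some `M` conjugate to `N_S(R)` has `Aut_S(M)` Sylow,
and Sylow's theorem provides an `F`-isomorphism `θ : N_S(R) → M` with `θ β θ⁻¹ ∈ Aut_S(M)`. Then
`θ(R)` is again fully centralized, as `θ` embeds `C_S(R)` into `C_S(θ(R))`, while `Aut_S(θ(R))`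
contains `θ Aut_S(R) θ⁻¹` and `θ α θ⁻¹`, contradicting maximality.

If `P` is fully normalized and `R` as above is conjugate to `P`, Sylow's theorem yields an
`F`-isomorphism `e : P → R` with `e Aut_S(P) e⁻¹ ≤ Aut_S(R)`, so `N_e = N_S(P)`. Axiom II extends
`e` to an injection `N_S(P) → N_S(R)`, a bijection since `P` is fully normalized, and its inverse
embeds `C_S(R)` into `C_S(P)`.
-/

open Subgroup

section GroupTheory

variable {G : Type*} [Group G]

theorem Subgroup.card_lt_card_of_lt {H K : Subgroup G} [Finite K] (h : H < K) :
    Nat.card H < Nat.card K :=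
  (card_le_of_le h.le).lt_of_ne fun hc => h.ne (eq_of_le_of_card_ge h.le hc.ge)

theorem range_subtype_comp_toMonoidHom {P Q : Subgroup G} (e : P ≃* Q) :
    (Q.subtype.comp e.toMonoidHom).range = Q := by
  ext q
  exact ⟨fun ⟨u, hu⟩ => hu ▸ (e u).2, fun hq => ⟨e.symm ⟨q, hq⟩, by simp⟩⟩

theorem subtype_comp_toMonoidHom_injective (Q : Subgroup G) :
    Function.Injective fun f : MulAut Q => Q.subtype.comp f.toMonoidHom :=
  fun _ _ h => MulEquiv.ext fun u => Subtype.ext (DFunLike.congr_fun h u)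

theorem MulAut.pow_apply_of_extends {H K : Subgroup G} {hHK : H ≤ K} {β : MulAut K}
    {α : MulAut H} (h : ∀ u : H, (β ⟨u, hHK u.2⟩ : G) = α u) (n : ℕ) (u : H) :
    ((β ^ n) ⟨u, hHK u.2⟩ : G) = (α ^ n) u := by
  induction n generalizing u with
  | zero => rfl
  | succ n ih =>
    rw [pow_succ', pow_succ', MulAut.mul_apply, MulAut.mul_apply, ← h]
    exact congrArg (fun x => (β x : G)) (Subtype.ext (ih u))

theorem range_le_normalizer_map_subgroupOf {H : Type*} [Group H] (P : Subgroup G)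
    (g : normalizer (P : Set G) →* H) :
    g.range ≤
      normalizer (((P.subgroupOf (normalizer (P : Set G))).map g : Subgroup H) : Set H) := by
  rw [MonoidHom.range_eq_map, ← @normalizer_eq_top _ _ _ normal_in_normalizer]
  exact le_normalizer_map g

theorem card_centralizer_le_of_injective [Finite G] {P Q : Subgroup G}
    (g : normalizer (P : Set G) →* G) (hg : Function.Injective g)
    (hQ : ∀ q ∈ Q, ∃ (u : G) (hu : u ∈ P), g ⟨u, le_normalizer hu⟩ = q) :
    Nat.card (centralizer (P : Set G)) ≤ Nat.card (centralizer (Q : Set G)) := by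
  have hCN := centralizer_le_normalizer (P : Set G)
  refine Nat.card_le_card_of_injective (fun z => ⟨g ⟨z, hCN z.2⟩, ?_⟩) fun z w hzw => ?_
  · refine mem_centralizer_iff.mpr fun q hq => ?_
    obtain ⟨u, hu, rfl⟩ := hQ q hq
    rw [← map_mul, ← map_mul]
    exact congrArg g (Subtype.ext (mem_centralizer_iff.mp z.2 u hu))
  · exact Subtype.ext (Subtype.mk.inj (hg (congrArg Subtype.val hzw)))

theorem card_centralizer_le_of_normalizer_mulEquiv [Finite G] {P Q : Subgroup G} (e : P ≃* Q)
    (ē : normalizer (P : Set G) ≃* normalizer (Q : Set G))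
    (hē : ∀ u : P, (ē ⟨u, le_normalizer u.2⟩ : G) = e u) :
    Nat.card (centralizer (Q : Set G)) ≤ Nat.card (centralizer (P : Set G)) := by
  refine card_centralizer_le_of_injective
    ((normalizer (P : Set G)).subtype.comp ē.symm.toMonoidHom)
    ((normalizer (P : Set G)).subtype_injective.comp ē.symm.injective) fun u hu => ?_
  refine ⟨e ⟨u, hu⟩, (e ⟨u, hu⟩).2, ?_⟩
  rw [MonoidHom.comp_apply, MulEquiv.coe_toMonoidHom,
    ē.symm_apply_eq.mpr (Subtype.ext (hē ⟨u, hu⟩).symm)]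
  rfl

theorem exists_pow_eq_self_isPGroup_zpowers_pow {p : ℕ} (hp : p.Prime) {M : Type*} [Finite G]
    [Monoid M] (β : G) {α : M} {k : ℕ} (hα : α ^ p ^ k = 1) :
    ∃ n : ℕ, α ^ n = α ∧ IsPGroup p (zpowers (β ^ n)) := by
  -- `n = m * c`: `m` is the `p'`-part of the order of `β`, `c` inverts `m` modulo that of `α`
  set m := ordCompl[p] (orderOf β)
  have hm : m.Coprime (orderOf α) :=
    ((Nat.coprime_ordCompl hp (orderOf_pos β).ne').symm.pow_right k).coprime_dvd_right
      (orderOf_dvd_of_pow_eq_one hα)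
  obtain ⟨c, hc⟩ := exists_pow_eq_self_of_coprime hm
  refine ⟨m * c, by rwa [pow_mul], IsPGroup.of_card_dvd_pow (n := (orderOf β).factorization p) ?_⟩
  rw [Nat.card_zpowers]
  apply orderOf_dvd_of_pow_eq_one
  rw [← pow_mul, mul_right_comm, mul_comm m, Nat.ordProj_mul_ordCompl_eq_self, pow_mul,
    pow_orderOf_eq_one, one_pow]

variable {p : ℕ} [Fact p.Prime] [Finite G] {T K : Subgroup G}

theorem IsPGroup.exists_conj_mem_of_not_dvd_relIndex (hT : IsPGroup p T)
    (hTK : ¬ p ∣ T.relIndex K) {U : Subgroup G} (hU : IsPGroup p U) (hUK : U ≤ K) :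
    ∃ g ∈ K, ∀ u ∈ U, g * u * g⁻¹ ∈ T := by
  obtain ⟨A, hUA⟩ := (hU.comap_subtype (K := K)).exists_le_sylow
  obtain ⟨g, hg⟩ := MulAction.exists_smul_eq K A ((hT.comap_subtype (K := K)).toSylow hTK)
  refine ⟨g, g.2, fun u hu => ?_⟩
  have h := smul_mem_pointwise_smul _ (MulAut.conj g) (A : Subgroup K)
    (hUA (show (⟨u, hUK hu⟩ : K) ∈ U.subgroupOf K from hu))
  rw [← Sylow.coe_subgroup_smul, hg] at h
  simp only [MulAut.smul_def, MulAut.conj_apply] at h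
  exact mem_subgroupOf.mp h

theorem IsPGroup.exists_mem_normalizer_not_mem_of_dvd_index (hT : IsPGroup p T)
    (hTG : p ∣ T.index) : ∃ a ∈ normalizer (T : Set G), a ∉ T ∧ ∃ k, a ^ p ^ k = 1 := by
  obtain ⟨A, hTA⟩ := hT.exists_le_sylow
  have hlt : T.subgroupOf A < ⊤ := by
    refine lt_top_iff_ne_top.mpr fun h => A.not_dvd_index ?_
    rwa [← le_antisymm hTA (subgroupOf_eq_top.mp h)]
  have : Group.IsNilpotent A := A.isPGroup'.isNilpotent
  obtain ⟨x, hxN, hxT⟩ := SetLike.exists_of_lt (Group.normalizerCondition_of_isNilpotent _ hlt)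
  rw [← subgroupOf_normalizer_eq hTA, mem_subgroupOf] at hxN
  obtain ⟨k, hk⟩ := A.isPGroup' x
  exact ⟨x, hxN, hxT, k, by simpa using congrArg Subtype.val hk⟩

theorem IsPGroup.exists_mem_normalizer_not_mem_of_dvd_relIndex (hT : IsPGroup p T)
    (hTK : T ≤ K) (hdvd : p ∣ T.relIndex K) :
    ∃ a ∈ K, a ∈ normalizer (T : Set G) ∧ a ∉ T ∧ ∃ k, a ^ p ^ k = 1 := by
  have hT' : IsPGroup p (T.subgroupOf K) := hT.comap_subtype
  obtain ⟨a, haN, haT, k, hk⟩ := hT'.exists_mem_normalizer_not_mem_of_dvd_index hdvd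
  rw [← subgroupOf_normalizer_eq hTK, mem_subgroupOf] at haN
  exact ⟨a, a.2, haN, haT, k, by simpa using congrArg Subtype.val hk⟩

end GroupTheory

section AutS

variable {S : Type*} [Group S]

def autS (Q : Subgroup S) : Subgroup (MulAut Q) :=
  Q.normalizerMonoidHom.range

theorem mem_autS_iff {Q : Subgroup S} {f : MulAut Q} :
    f ∈ autS Q ↔ ∃ y : S, ∀ u : Q, (f u : S) = y * u * y⁻¹ := by
  constructor
  · rintro ⟨⟨y, -⟩, rfl⟩
    exact ⟨y, fun u => rfl⟩
  · rintro ⟨y, hy⟩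
    have hyN : y ∈ normalizer (Q : Set S) := by
      refine mem_normalizer_iff.mpr fun h => ⟨fun hh => hy ⟨h, hh⟩ ▸ (f ⟨h, hh⟩).2, fun hh => ?_⟩
      have h' := hy (f⁻¹ ⟨_, hh⟩)
      rw [show f (f⁻¹ ⟨_, hh⟩) = ⟨_, hh⟩ from f.apply_symm_apply _, mul_left_inj,
        mul_right_inj] at h'
      exact h' ▸ (f⁻¹ ⟨_, hh⟩).2
    exact ⟨⟨y, hyN⟩, MulEquiv.ext fun u => Subtype.ext (hy u).symm⟩

theorem congr_mem_autS_iff {P Q : Subgroup S} (e : P ≃* Q) (f : MulAut P) :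
    MulAut.congr e f ∈ autS Q ↔ ∃ y : S, ∀ u : P, (e (f u) : S) = y * e u * y⁻¹ := by
  rw [mem_autS_iff]
  refine exists_congr fun y => ?_
  rw [e.surjective.forall]
  simp

theorem isPGroup_autS {p : ℕ} (hS : IsPGroup p S) (Q : Subgroup S) : IsPGroup p (autS Q) :=
  (hS.to_subgroup _).of_surjective _ Q.normalizerMonoidHom.rangeRestrict_surjective

theorem card_autS (Q : Subgroup S) : Nat.card (autS Q) = Nat.card (autSSet Q) := by
  have himage : (fun f : MulAut Q => Q.subtype.comp f.toMonoidHom) '' (autS Q : Set _) =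
      autSSet Q := by
    ext φ
    constructor
    · rintro ⟨_, ⟨x, rfl⟩, rfl⟩
      exact ⟨x, x.2, rfl⟩
    · rintro ⟨x, hx, rfl⟩
      exact ⟨_, ⟨⟨x, hx⟩, rfl⟩, rfl⟩
  rw [← himage, Nat.card_image_of_injective (subtype_comp_toMonoidHom_injective Q)]
  rfl

end AutS

namespace FusionSystem

variable {S : Type*} [Group S] (F : FusionSystem S)

theorem mem_hom_of_range_le {P Q Q' : Subgroup S} {φ : P →* S} (hφ : φ ∈ F.Hom P Q)
    (h : φ.range ≤ Q') : φ ∈ F.Hom P Q' := by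
  have hc := F.comp_mem' (F.target_mem' hφ)
    (F.conj_mem' φ.range Q' 1 fun u hu => by simpa using h hu)
  convert hc using 1
  ext u
  simp [conjHom, MonoidHom.codRestrict]

theorem comp_inclusion_mem {P P' Q : Subgroup S} (h : P' ≤ P) {φ : P →* S}
    (hφ : φ ∈ F.Hom P Q) : φ.comp (inclusion h) ∈ F.Hom P' Q := by
  have hc := F.comp_mem' (F.conj_mem' P' P 1 fun u hu => by simpa using h hu) hφ
  convert hc using 1
  ext u
  simp [conjHom, MonoidHom.codRestrict, inclusion]

theorem exists_inv_mem {P Q : Subgroup S} {φ : P →* S} (hφ : φ ∈ F.Hom P Q) (hr : φ.range = Q) :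
    ∃ ψ ∈ F.Hom Q P, ∀ (u : P) (hu : φ u ∈ Q), ψ ⟨φ u, hu⟩ = u := by
  subst hr
  obtain ⟨ψ, hψ, hψφ⟩ := F.inv_mem' hφ
  exact ⟨ψ, hψ, fun u _ => hψφ u⟩

def IsIso {P Q : Subgroup S} (e : P ≃* Q) : Prop :=
  Q.subtype.comp e.toMonoidHom ∈ F.Hom P Q

variable {F}

theorem isIso_refl (P : Subgroup S) : F.IsIso (MulEquiv.refl P) := by
  unfold IsIso
  convert F.conj_mem' P P 1 fun u hu => by simpa using hu using 1
  ext u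
  simp [conjHom]

theorem IsIso.trans {P Q R : Subgroup S} {e₁ : P ≃* Q} {e₂ : Q ≃* R} (h₁ : F.IsIso e₁)
    (h₂ : F.IsIso e₂) : F.IsIso (e₁.trans e₂) :=
  F.comp_mem' h₁ h₂

theorem IsIso.symm {P Q : Subgroup S} {e : P ≃* Q} (he : F.IsIso e) : F.IsIso e.symm := by
  obtain ⟨ψ, hψ, hψe⟩ := F.exists_inv_mem he (range_subtype_comp_toMonoidHom e)
  unfold IsIso
  convert hψ using 1
  ext v
  obtain ⟨u, rfl⟩ := e.surjective v
  simpa using (hψe u (e u).2).symm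

theorem isIso_ofInjective {P Q : Subgroup S} {φ : P →* S} (hφ : φ ∈ F.Hom P Q) :
    F.IsIso (MonoidHom.ofInjective (F.injective' hφ)) := by
  unfold IsIso
  convert F.target_mem' hφ using 1
  ext u
  exact MonoidHom.ofInjective_apply (F.injective' hφ)

theorem exists_isIso_of_card_le [Finite S] {P Q : Subgroup S} {φ : P →* S} (hφ : φ ∈ F.Hom P Q)
    (h : Nat.card Q ≤ Nat.card P) : ∃ e : P ≃* Q, F.IsIso e ∧ ∀ u, (e u : S) = φ u := by
  have hinj : Function.Injective (φ.codRestrict Q (F.mapsTo' hφ)) :=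
    fun a b hab => F.injective' hφ (congrArg Subtype.val hab)
  have hbij := (Nat.bijective_iff_injective_and_card _).mpr
    ⟨hinj, le_antisymm (Nat.card_le_card_of_injective _ hinj) h⟩
  exact ⟨MulEquiv.ofBijective _ hbij, hφ, fun u => rfl⟩

theorem isConj_iff {P Q : Subgroup S} : F.Hom.IsConj P Q ↔ ∃ e : P ≃* Q, F.IsIso e := by
  constructor
  · rintro ⟨φ, hφ, rfl⟩
    exact ⟨MonoidHom.ofInjective (F.injective' hφ), isIso_ofInjective hφ⟩
  · rintro ⟨e, he⟩
    exact ⟨_, he, range_subtype_comp_toMonoidHom e⟩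

theorem isConj_refl (P : Subgroup S) : F.Hom.IsConj P P :=
  isConj_iff.mpr ⟨_, isIso_refl P⟩

theorem isConj_symm {P Q : Subgroup S} (h : F.Hom.IsConj P Q) : F.Hom.IsConj Q P := by
  obtain ⟨e, he⟩ := isConj_iff.mp h
  exact isConj_iff.mpr ⟨_, he.symm⟩

theorem isConj_trans {P Q R : Subgroup S} (h₁ : F.Hom.IsConj P Q) (h₂ : F.Hom.IsConj Q R) :
    F.Hom.IsConj P R := by
  obtain ⟨e₁, he₁⟩ := isConj_iff.mp h₁
  obtain ⟨e₂, he₂⟩ := isConj_iff.mp h₂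
  exact isConj_iff.mpr ⟨_, he₁.trans he₂⟩

theorem card_eq_of_isConj {P Q : Subgroup S} (h : F.Hom.IsConj P Q) :
    Nat.card P = Nat.card Q := by
  obtain ⟨e, -⟩ := isConj_iff.mp h
  exact Nat.card_congr e.toEquiv

theorem eq_top_of_isConj_top [Finite S] {Q : Subgroup S} (h : F.Hom.IsConj ⊤ Q) : Q = ⊤ :=
  eq_top_of_card_eq Q ((card_eq_of_isConj h).symm.trans card_top)

theorem fullyCentralized_top [Finite S] : F.Hom.FullyCentralized ⊤ :=
  fun _ h => (eq_top_of_isConj_top h) ▸ le_rfl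

theorem exists_isConj_fullyCentralized [Finite S] (P : Subgroup S) :
    ∃ R, F.Hom.IsConj P R ∧ F.Hom.FullyCentralized R := by
  obtain ⟨R, hPR, hmax⟩ := Set.exists_max_image {R | F.Hom.IsConj P R}
    (fun R : Subgroup S => Nat.card (centralizer (R : Set S))) (Set.toFinite _) ⟨P, isConj_refl P⟩
  exact ⟨R, hPR, fun Q hRQ => hmax Q (isConj_trans hPR hRQ)⟩

theorem fullyCentralized_of_isConj {R R' : Subgroup S} (hR : F.Hom.FullyCentralized R)
    (hRR' : F.Hom.IsConj R R')
    (hC : Nat.card (centralizer (R : Set S)) ≤ Nat.card (centralizer (R' : Set S))) :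
    F.Hom.FullyCentralized R' :=
  fun Q hQ => (hR Q (isConj_trans hRR' hQ)).trans hC

variable (F) in
def autF (Q : Subgroup S) : Subgroup (MulAut Q) where
  carrier := {f | F.IsIso f}
  one_mem' := isIso_refl Q
  mul_mem' hf hg := IsIso.trans hg hf
  inv_mem' hf := IsIso.symm hf

theorem IsIso.congr_mem_autF {P Q : Subgroup S} {e : P ≃* Q} (he : F.IsIso e) {f : MulAut P}
    (hf : f ∈ F.autF P) : MulAut.congr e f ∈ F.autF Q :=
  (he.symm.trans hf).trans he

variable (F) in
theorem autS_le_autF (Q : Subgroup S) : autS Q ≤ F.autF Q := by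
  rintro _ ⟨x, rfl⟩
  exact F.conj_mem' Q Q x fun u hu => (mem_normalizer_iff.mp x.2 u).mp hu

variable (F) in
theorem card_autF [Finite S] (Q : Subgroup S) : Nat.card (F.autF Q) = Nat.card (F.Hom Q Q) := by
  have himage : (fun f : MulAut Q => Q.subtype.comp f.toMonoidHom) '' (F.autF Q : Set _) =
      F.Hom Q Q := by
    ext φ
    refine ⟨fun ⟨f, hf, hfφ⟩ => hfφ ▸ hf, fun hφ => ?_⟩
    obtain ⟨e, he, heφ⟩ := exists_isIso_of_card_le hφ le_rfl
    exact ⟨e, he, MonoidHom.ext heφ⟩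
  rw [← himage, Nat.card_image_of_injective (subtype_comp_toMonoidHom_injective Q)]
  rfl

theorem not_dvd_relIndex_of_autSIsSylow [Finite S] {p : ℕ} {Q : Subgroup S}
    (h : F.Hom.AutSIsSylow p Q) : ¬ p ∣ (autS Q).relIndex (F.autF Q) := by
  obtain ⟨-, -, k, hk, hcard⟩ := h
  have hmul := relIndex_mul_relIndex ⊥ (autS Q) (F.autF Q) bot_le (autS_le_autF F Q)
  rw [relIndex_bot_left, relIndex_bot_left, card_autF, hcard, ← card_autS, mul_comm] at hmul
  rwa [Nat.eq_of_mul_eq_mul_right Nat.card_pos hmul]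

theorem exists_isIso_congr_mem_autS [Finite S] {p : ℕ} [Fact p.Prime] (hS : IsPGroup p S)
    {P Q : Subgroup S} {e₀ : P ≃* Q} (he₀ : F.IsIso e₀)
    (hQ : ¬ p ∣ (autS Q).relIndex (F.autF Q)) {U : Subgroup (MulAut P)} (hU : IsPGroup p U)
    (hUF : U ≤ F.autF P) : ∃ e : P ≃* Q, F.IsIso e ∧ ∀ f ∈ U, MulAut.congr e f ∈ autS Q := by
  obtain ⟨χ, hχ, hχU⟩ := (isPGroup_autS hS Q).exists_conj_mem_of_not_dvd_relIndex hQ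
    (hU.map (MulAut.congr e₀).toMonoidHom)
    (map_le_iff_le_comap.mpr fun f hf => he₀.congr_mem_autF (hUF hf))
  refine ⟨e₀.trans χ, he₀.trans hχ, fun f hf => ?_⟩
  convert hχU _ (mem_map_of_mem _ hf) using 1
  ext u
  rfl

theorem normalizer_le_Nphi {P Q : Subgroup S} (e : P ≃* Q)
    (he : ∀ f ∈ autS P, MulAut.congr e f ∈ autS Q) :
    normalizer (P : Set S) ≤ Nphi P (Q.subtype.comp e.toMonoidHom) := by
  intro x hx
  obtain ⟨⟨y, hy⟩, hxy⟩ := he _ ⟨⟨x, hx⟩, rfl⟩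
  refine ⟨hx, y, (range_subtype_comp_toMonoidHom e).symm ▸ hy, fun u v hu hv huv => ?_⟩
  subst huv
  have h : (e (P.normalizerMonoidHom ⟨x, hx⟩ ⟨u, hu⟩) : S) = y * e ⟨u, hu⟩ * y⁻¹ := by
    simpa using (congrArg (fun f : MulAut Q => (f (e ⟨u, hu⟩) : S)) hxy).symm
  exact h

theorem exists_isIso_normalizer_extending [Finite S] (hII : F.AxiomII) {P Q : Subgroup S}
    {e : P ≃* Q} (he : F.IsIso e) (hQ : F.Hom.FullyCentralized Q)
    (heS : ∀ f ∈ autS P, MulAut.congr e f ∈ autS Q)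
    (hcard : Nat.card (normalizer (Q : Set S)) ≤ Nat.card (normalizer (P : Set S))) :
    ∃ ē : normalizer (P : Set S) ≃* normalizer (Q : Set S), F.IsIso ē ∧
      ∀ u : P, (ē ⟨u, le_normalizer u.2⟩ : S) = e u := by
  have hN := normalizer_le_Nphi e heS
  obtain ⟨φ, hφ, hφe⟩ := hII P _ (F.mem_hom_of_range_le he le_top)
    ((range_subtype_comp_toMonoidHom e).symm ▸ hQ)
  set g := φ.comp (inclusion hN)
  have hge : ∀ u : P, g ⟨u, le_normalizer u.2⟩ = e u := fun u => hφe u u.2 _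
  have hgQ : (P.subgroupOf (normalizer (P : Set S))).map g = Q := by
    ext q
    constructor
    · rintro ⟨x, hx, rfl⟩
      exact (hge ⟨x, hx⟩) ▸ (e ⟨x, hx⟩).2
    · intro hq
      obtain ⟨u, hu⟩ := e.surjective ⟨q, hq⟩
      exact ⟨⟨u, le_normalizer u.2⟩, u.2, by rw [hge, hu]⟩
  have hgN := range_le_normalizer_map_subgroupOf P g
  rw [hgQ] at hgN
  obtain ⟨ē, hē, hēg⟩ :=
    exists_isIso_of_card_le (F.mem_hom_of_range_le (F.comp_inclusion_mem hN hφ) hgN) hcard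
  exact ⟨ē, hē, fun u => (hēg _).trans (hge u)⟩

theorem exists_isConj_card_autS_lt [Finite S] {R M : Subgroup S}
    {θ : normalizer (R : Set S) ≃* M} (hθ : F.IsIso θ) {α : MulAut R} (hα : α ∉ autS R)
    {β : MulAut (normalizer (R : Set S))} (hβα : ∀ u : R, (β ⟨u, le_normalizer u.2⟩ : S) = α u)
    (hθβ : MulAut.congr θ β ∈ autS M) :
    ∃ R', F.Hom.IsConj R R' ∧
      Nat.card (centralizer (R : Set S)) ≤ Nat.card (centralizer (R' : Set S)) ∧
      Nat.card (autS R) < Nat.card (autS R') := by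
  set g : normalizer (R : Set S) →* S := M.subtype.comp θ.toMonoidHom
  have hρ := F.comp_inclusion_mem le_normalizer hθ
  set R' := (g.comp (inclusion le_normalizer)).range
  set ρ : R ≃* R' := MonoidHom.ofInjective (F.injective' hρ)
  have hρθ : ∀ u : R, (ρ u : S) = θ ⟨u, le_normalizer u.2⟩ :=
    fun u => MonoidHom.ofInjective_apply _
  have hmap : (autS R).map (MulAut.congr ρ).toMonoidHom ≤ autS R' := by
    rintro _ ⟨_, ⟨x, rfl⟩, rfl⟩
    refine (congr_mem_autS_iff ρ _).mpr ⟨θ x, fun u => ?_⟩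
    have hxu : (⟨_, le_normalizer (R.normalizerMonoidHom x u).2⟩ : normalizer (R : Set S)) =
        x * ⟨u, le_normalizer u.2⟩ * x⁻¹ := rfl
    rw [hρθ, hρθ, hxu, map_mul, map_mul, map_inv]
    rfl
  have hαρ : MulAut.congr ρ α ∈ autS R' := by
    obtain ⟨y, hy⟩ := (congr_mem_autS_iff θ β).mp hθβ
    refine (congr_mem_autS_iff ρ α).mpr ⟨y, fun u => ?_⟩
    rw [hρθ, hρθ, ← hy]
    exact congrArg (fun n => (θ n : S)) (Subtype.ext (hβα u).symm)
  have hlt : (autS R).map (MulAut.congr ρ).toMonoidHom < autS R' :=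
    SetLike.lt_iff_le_and_exists.mpr ⟨hmap, _, hαρ,
      fun h => hα ((mem_map_iff_mem (MulAut.congr ρ).injective).mp h)⟩
  refine ⟨R', isConj_iff.mpr ⟨ρ, isIso_ofInjective hρ⟩,
    card_centralizer_le_of_injective g (F.injective' hθ) ?_, ?_⟩
  · rintro _ ⟨u, rfl⟩
    exact ⟨u, u.2, rfl⟩
  · rw [← card_map_of_injective (f := (MulAut.congr ρ).toMonoidHom) (MulAut.congr ρ).injective]
    exact card_lt_card_of_lt hlt

theorem exists_isConj_fullyCentralized_not_dvd_relIndex [Finite S] {p : ℕ} [hp : Fact p.Prime]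
    (hS : IsPGroup p S) (hIS : F.AxiomIS p) (hII : F.AxiomII) (P : Subgroup S) :
    ∃ R, F.Hom.IsConj P R ∧ F.Hom.FullyCentralized R ∧ ¬ p ∣ (autS R).relIndex (F.autF R) := by
  induction P using (measure fun P : Subgroup S => Nat.card S - Nat.card P).wf.induction with
  | _ P ih =>
  by_cases hP : P = ⊤
  · subst hP
    exact ⟨⊤, isConj_refl ⊤, fullyCentralized_top, not_dvd_relIndex_of_autSIsSylow hIS⟩
  obtain ⟨R, ⟨hPR, hR⟩, hRmax⟩ := Set.exists_max_image
    {R | F.Hom.IsConj P R ∧ F.Hom.FullyCentralized R} (fun R => Nat.card (autS R))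
    (Set.toFinite _) (exists_isConj_fullyCentralized P)
  refine ⟨R, hPR, hR, fun hdvd => ?_⟩
  obtain ⟨α, hαF, hαN, hαS, k, hαk⟩ :=
    (isPGroup_autS hS R).exists_mem_normalizer_not_mem_of_dvd_relIndex (autS_le_autF F R) hdvd
  obtain ⟨β, hβF, hβα⟩ := exists_isIso_normalizer_extending hII hαF hR
    (fun f hf => (mem_normalizer_iff.mp hαN f).mp hf) le_rfl
  obtain ⟨n, hαn, hβn⟩ := exists_pow_eq_self_isPGroup_zpowers_pow hp.out β hαk
  have hRN : Nat.card P < Nat.card (normalizer (R : Set S)) := by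
    have : Group.IsNilpotent S := hS.isNilpotent
    have hRtop : R ≠ ⊤ := fun h => hP (eq_top_of_isConj_top (h ▸ isConj_symm hPR))
    rw [card_eq_of_isConj hPR]
    exact card_lt_card_of_lt
      (Group.normalizerCondition_of_isNilpotent R (lt_top_iff_ne_top.mpr hRtop))
  obtain ⟨M, hNM, -, hM⟩ := ih (normalizer (R : Set S)) (by
    have := (normalizer (R : Set S)).card_le_card_group
    show Nat.card S - _ < Nat.card S - _
    omega)
  obtain ⟨e₀, he₀⟩ := isConj_iff.mp hNM
  obtain ⟨θ, hθ, hθβ⟩ := exists_isIso_congr_mem_autS hS he₀ hM hβn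
    (zpowers_le.mpr (pow_mem hβF n))
  obtain ⟨R', hRR', hC, hA⟩ := exists_isConj_card_autS_lt hθ hαS
    (fun u => by rw [MulAut.pow_apply_of_extends hβα, hαn]) (hθβ _ (mem_zpowers _))
  exact (hRmax R' ⟨isConj_trans hPR hRR', fullyCentralized_of_isConj hR hRR' hC⟩).not_gt hA

end FusionSystem

open FusionSystem

/-- Let `F` be a fusion system on a finite `p`-group `S` satisfying
Axioms I_S and II.  Then every fully `F`-normalized subgroup of `S` is fully
`F`-centralized. -/
theorem fullyNormalized_implies_fullyCentralized
    (p : ℕ) (hp : p.Prime) (S : Type*) [Group S] [Finite S] (hS : IsPGroup p S)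
    (F : FusionSystem S) (hIS : F.AxiomIS p) (hII : F.AxiomII) :
    ∀ P : Subgroup S, F.Hom.FullyNormalized P → F.Hom.FullyCentralized P := by
  have : Fact p.Prime := ⟨hp⟩
  intro P hP
  obtain ⟨R, hPR, hR, hRsyl⟩ := exists_isConj_fullyCentralized_not_dvd_relIndex hS hIS hII P
  obtain ⟨e₀, he₀⟩ := isConj_iff.mp hPR
  obtain ⟨e, he, heS⟩ :=
    exists_isIso_congr_mem_autS hS he₀ hRsyl (isPGroup_autS hS P) (autS_le_autF F P)
  obtain ⟨ē, -, hē⟩ := exists_isIso_normalizer_extending hII he hR heS (hP R hPR)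
  exact fun Q hQ => (hR Q (isConj_trans (isConj_symm hPR) hQ)).trans
    (card_centralizer_le_of_normalizer_mulEquiv e ē hē)
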